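/- For the sunlet graph S_n, n ≥ 3, the maximax independence chromatic number satisfies χ^{i-max}(S_n) = χ(S_n) + 1, i.e., equals 3 if n is even and 4 if n is odd. -/

import Mathlib

/-- A set of vertices is independent if no two of its members are adjacent. -/
def IsIndep {V : Type*} (G : SimpleGraph V) (S : Set V) : Prop :=
  S.Pairwise fun u v => ¬ G.Adj u v

/-- The independence number of `G` restricted to the vertex set `R`. -/
noncomputable def indepNumOn {V : Type*} (G : SimpleGraph V) (R : Set V) : ℕ :=
  sSup {k : ℕ | ∃ S : Set V, S ⊆ R ∧ IsIndep G S ∧ S.ncard = k}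

/-- `S` is a maximum independent set of `G` restricted to `R`. -/
def IsMaxIndepOn {V : Type*} (G : SimpleGraph V) (R S : Set V) : Prop :=
  S ⊆ R ∧ IsIndep G S ∧ S.ncard = indepNumOn G R

/-- One step of the maximax independence procedure on remaining vertex set `R`:
remove a maximum independent set `S` chosen so that the remaining graph has
minimum independence number among all choices of maximum independent set. -/
def IsMaximaxStep {V : Type*} (G : SimpleGraph V) (R S : Set V) : Prop :=
  IsMaxIndepOn G R S ∧
    ∀ T : Set V, IsMaxIndepOn G R T → indepNumOn G (R \ S) ≤ indepNumOn G (R \ T)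

/-- `IsMaximaxSeq G R L` : the list `L` of colour classes is obtained by iterating
the maximax independence procedure starting from remaining vertex set `R`,
until no vertex remains. -/
def IsMaximaxSeq {V : Type*} (G : SimpleGraph V) : Set V → List (Set V) → Prop
  | R, [] => R = ∅
  | R, S :: L => S.Nonempty ∧ IsMaximaxStep G R S ∧ IsMaximaxSeq G (R \ S) L

/-- `χ^{i-max}(G) = ℓ` : the maximax independence, maximum proper colouring of `G`
uses exactly `ℓ` colours. -/
def ChiImaxEq {V : Type*} (G : SimpleGraph V) (ℓ : ℕ) : Prop :=
  (∃ L, IsMaximaxSeq G Set.univ L ∧ L.length = ℓ) ∧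
    ∀ L, IsMaximaxSeq G Set.univ L → L.length = ℓ

/-- The sunlet graph: the cycle `Cₙ` on the vertices `Sum.inl i`, with a pendant
vertex `Sum.inr i` attached to each cycle vertex `Sum.inl i`. -/
def sunlet (n : ℕ) : SimpleGraph (Fin n ⊕ Fin n) :=
  SimpleGraph.fromRel (fun a b => match a, b with
    | Sum.inl i, Sum.inl j => (SimpleGraph.cycleGraph n).Adj i j
    | Sum.inl i, Sum.inr j => i = j
    | _, _ => False)

/-!
An independent set of the sunlet graph meets each pair `{inl i, inr i}` at most once, so
`α(Sₙ) = n`, attained by the pendants. If a maximum independent set `S` contains a cycle vertex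
`j`, what remains of the graph still contains the pendants below the cycle vertices of `S`
together with the cycle vertices of `P \ S`, for an independent set `P` of `Cₙ` of size `⌊n/2⌋`
avoiding `j` (a maximum independent set or its rotation by one); this has more than `⌊n/2⌋`
elements, whereas removing the pendants leaves `Cₙ`, with `α(Cₙ) = ⌊n/2⌋`. So the maximax rule
removes the pendants first. Next `Cₙ` loses a maximum independent set `A`; its complement
contains the rotation `A + 1`, so it keeps independence number `⌊n/2⌋` on `⌈n/2⌉` vertices and
is exhausted in one more step if `n` is even and in two if `n` is odd.
-/

open Set SimpleGraph

section IndepNum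
variable {V : Type*} {G : SimpleGraph V} {R S : Set V}

lemma isIndep_singleton (v : V) : IsIndep G {v} := pairwise_singleton _ _

lemma indepNumOn_le {m : ℕ} (h : ∀ S ⊆ R, IsIndep G S → S.ncard ≤ m) : indepNumOn G R ≤ m :=
  csSup_le ⟨0, ∅, empty_subset R, pairwise_empty _, ncard_empty V⟩ <| by
    rintro _ ⟨S, hSR, hS, rfl⟩
    exact h S hSR hS

variable [Finite V]

lemma le_indepNumOn (hSR : S ⊆ R) (hS : IsIndep G S) : S.ncard ≤ indepNumOn G R :=
  le_csSup ⟨Nat.card V, by rintro _ ⟨T, -, -, rfl⟩; exact ncard_le_card T⟩ ⟨S, hSR, hS, rfl⟩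

lemma indepNumOn_eq {m : ℕ} (hSR : S ⊆ R) (hS : IsIndep G S) (hcard : S.ncard = m)
    (h : ∀ T ⊆ R, IsIndep G T → T.ncard ≤ m) : indepNumOn G R = m :=
  (indepNumOn_le h).antisymm (hcard ▸ le_indepNumOn hSR hS)

lemma indepNumOn_singleton (v : V) : indepNumOn G {v} = 1 :=
  indepNumOn_eq Subset.rfl (isIndep_singleton v) (ncard_singleton v)
    fun _ hT _ => (ncard_le_ncard hT).trans (ncard_singleton v).le

lemma exists_isMaxIndepOn (G : SimpleGraph V) (R : Set V) : ∃ S, IsMaxIndepOn G R S :=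
  Nat.sSup_mem (s := {k | ∃ S ⊆ R, IsIndep G S ∧ S.ncard = k})
    ⟨0, ∅, empty_subset R, pairwise_empty _, ncard_empty V⟩
    ⟨Nat.card V, by rintro _ ⟨T, -, -, rfl⟩; exact ncard_le_card T⟩

end IndepNum

section Maximax
variable {V : Type*} {G : SimpleGraph V} {R S : Set V} {L : List (Set V)}

lemma IsMaximaxSeq.eq_nil_of_empty (hL : IsMaximaxSeq G ∅ L) : L = [] := by
  cases L with
  | nil => rfl
  | cons S L' =>
    obtain ⟨⟨v, hv⟩, ⟨⟨hS, -⟩, -⟩, -⟩ := hL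
    exact absurd (hS hv) (notMem_empty v)

lemma IsMaximaxSeq.exists_cons (hL : IsMaximaxSeq G R L) (hR : R.Nonempty) :
    ∃ S L', L = S :: L' ∧ IsMaximaxStep G R S ∧ IsMaximaxSeq G (R \ S) L' := by
  cases L with
  | nil => exact absurd hL hR.ne_empty
  | cons S L' => exact ⟨S, L', rfl, hL.2⟩

variable [Finite V]

lemma IsMaxIndepOn.nonempty (hS : IsMaxIndepOn G R S) (hR : R.Nonempty) : S.Nonempty := by
  obtain ⟨v, hv⟩ := hR
  have := le_indepNumOn (singleton_subset_iff.2 hv) (isIndep_singleton (G := G) v)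
  rw [ncard_singleton, ← hS.2.2] at this
  exact (ncard_pos (toFinite S)).1 this

lemma exists_isMaximaxStep (G : SimpleGraph V) (R : Set V) : ∃ S, IsMaximaxStep G R S :=
  exists_min_image {T | IsMaxIndepOn G R T} (fun T => indepNumOn G (R \ T)) (toFinite _)
    (exists_isMaxIndepOn G R)

lemma exists_isMaximaxSeq (G : SimpleGraph V) (R : Set V) : ∃ L, IsMaximaxSeq G R L := by
  induction hk : R.ncard using Nat.strong_induction_on generalizing R with
  | _ k ih =>
    rcases R.eq_empty_or_nonempty with rfl | hR
    · exact ⟨[], rfl⟩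
    obtain ⟨S, hS⟩ := exists_isMaximaxStep G R
    have hSne := hS.1.nonempty hR
    have hlt : (R \ S).ncard < k :=
      hk ▸ ncard_lt_ncard (sdiff_ssubset_left_iff.2 (by rwa [inter_eq_right.2 hS.1.1]))
    obtain ⟨L, hL⟩ := ih _ hlt (R \ S) rfl
    exact ⟨S :: L, hSne, hS, hL⟩

lemma IsMaximaxSeq.length_eq_one (hL : IsMaximaxSeq G R L) (hR : R.Nonempty)
    (hcard : R.ncard = indepNumOn G R) : L.length = 1 := by
  obtain ⟨S, L', rfl, ⟨⟨hSR, -, hS⟩, -⟩, hL'⟩ := hL.exists_cons hR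
  obtain rfl : S = R := eq_of_subset_of_ncard_le hSR (hcard.trans hS.symm).le
  rw [sdiff_self] at hL'
  rw [hL'.eq_nil_of_empty, List.length_singleton]

lemma IsMaximaxSeq.length_eq_two (hL : IsMaximaxSeq G R L)
    (hcard : R.ncard = indepNumOn G R + 1) : L.length = 2 := by
  obtain ⟨S, L', rfl, ⟨⟨hSR, -, hS⟩, -⟩, hL'⟩ :=
    hL.exists_cons (nonempty_of_ncard_ne_zero (by omega))
  obtain ⟨v, hv⟩ : ∃ v, R \ S = {v} := ncard_eq_one.1 (by rw [ncard_sdiff hSR]; omega)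
  rw [hv] at hL'
  rw [List.length_cons, hL'.length_eq_one (singleton_nonempty v)
    (by rw [ncard_singleton, indepNumOn_singleton])]

lemma chiImaxEq_of_forall_length_eq {ℓ : ℕ} (h : ∀ L, IsMaximaxSeq G univ L → L.length = ℓ) :
    ChiImaxEq G ℓ :=
  have ⟨L, hL⟩ := exists_isMaximaxSeq G univ
  ⟨⟨L, hL, h L hL⟩, h⟩

end Maximax

section Embedding
variable {V W : Type*} {G : SimpleGraph V} {H : SimpleGraph W} (f : G ↪g H)

lemma isIndep_image_iff {A : Set V} : IsIndep H (f '' A) ↔ IsIndep G A := by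
  simp [IsIndep, Set.Pairwise, f.injective.eq_iff]

lemma indepNumOn_image (B : Set V) : indepNumOn H (f '' B) = indepNumOn G B := by
  unfold indepNumOn
  congr 1
  ext k
  constructor
  · rintro ⟨S, hSB, hS, rfl⟩
    obtain ⟨A, hAB, rfl⟩ := subset_image_iff.1 hSB
    exact ⟨A, hAB, (isIndep_image_iff f).1 hS, (ncard_image_of_injective A f.injective).symm⟩
  · rintro ⟨A, hAB, hA, rfl⟩
    exact ⟨f '' A, image_mono hAB, (isIndep_image_iff f).2 hA,
      ncard_image_of_injective A f.injective⟩

end Embedding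

section Cycle
variable {n : ℕ} {A : Set (Fin (n + 2))}

lemma isIndep_cycleGraph_iff : IsIndep (cycleGraph (n + 2)) A ↔ ∀ a ∈ A, a + 1 ∉ A := by
  constructor
  · intro hA a ha ha1
    exact hA ha ha1 (by simp) (cycleGraph_adj.2 (Or.inr (add_sub_cancel_left a 1)))
  · rintro h a ha b hb - (hab | hab)
    · rw [sub_eq_iff_eq_add'] at hab
      exact h b hb (hab ▸ ha)
    · rw [sub_eq_iff_eq_add'] at hab
      exact h a ha (hab ▸ hb)

lemma IsIndep.image_add_one (hA : IsIndep (cycleGraph (n + 2)) A) :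
    IsIndep (cycleGraph (n + 2)) ((· + 1) '' A) := by
  refine isIndep_cycleGraph_iff.2 ?_
  rintro _ ⟨a, ha, rfl⟩ ⟨b, hb, hba⟩
  have hb' : b = a + 1 := add_right_cancel hba
  exact isIndep_cycleGraph_iff.1 hA a ha (hb' ▸ hb)

lemma IsIndep.disjoint_image_add_one (hA : IsIndep (cycleGraph (n + 2)) A) :
    Disjoint A ((· + 1) '' A) :=
  disjoint_left.2 <| by
    rintro _ ha ⟨b, hb, rfl⟩
    exact isIndep_cycleGraph_iff.1 hA b hb ha

lemma ncard_image_add_one (A : Set (Fin (n + 2))) : ((· + 1) '' A).ncard = A.ncard :=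
  ncard_image_of_injective A (add_left_injective 1)

lemma IsIndep.two_mul_ncard_le (hA : IsIndep (cycleGraph (n + 2)) A) : 2 * A.ncard ≤ n + 2 := by
  have hunion := ncard_union_eq hA.disjoint_image_add_one
  have hle := ncard_le_card (A ∪ (· + 1) '' A)
  rw [hunion, ncard_image_add_one, Nat.card_fin] at hle
  omega

lemma exists_isIndep_cycleGraph_ncard_eq :
    ∃ P, IsIndep (cycleGraph (n + 2)) P ∧ P.ncard = (n + 2) / 2 := by
  have hodd : (fun k : Fin ((n + 2) / 2) => (⟨2 * k + 1, by omega⟩ : Fin (n + 2))).Injective :=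
    fun k l h => Fin.ext (by simpa using h)
  refine ⟨range _, isIndep_cycleGraph_iff.2 ?_, by rw [ncard_range_of_injective hodd, Nat.card_fin]⟩
  rintro _ ⟨k, rfl⟩ ⟨l, hl⟩
  have hval := congrArg Fin.val hl
  rw [Fin.val_add_one] at hval
  -- `split_ifs` closes the wrap-around case `(odd k) + 1 = 0` itself, as `0` is not odd
  split_ifs at hval
  dsimp only at hval
  omega

lemma exists_isIndep_cycleGraph_ncard_eq_notMem (j : Fin (n + 2)) :
    ∃ P, IsIndep (cycleGraph (n + 2)) P ∧ P.ncard = (n + 2) / 2 ∧ j ∉ P := by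
  obtain ⟨P, hP, hcard⟩ := exists_isIndep_cycleGraph_ncard_eq (n := n)
  by_cases hj : j ∈ P
  · exact ⟨_, hP.image_add_one, (ncard_image_add_one P).trans hcard,
      disjoint_left.1 hP.disjoint_image_add_one hj⟩
  · exact ⟨P, hP, hcard, hj⟩

lemma indepNumOn_cycleGraph_univ : indepNumOn (cycleGraph (n + 2)) univ = (n + 2) / 2 :=
  have ⟨P, hP, hcard⟩ := exists_isIndep_cycleGraph_ncard_eq (n := n)
  indepNumOn_eq (subset_univ P) hP hcard fun _ _ hT => by
    have := hT.two_mul_ncard_le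
    omega

lemma IsIndep.indepNumOn_compl (hA : IsIndep (cycleGraph (n + 2)) A)
    (hcard : A.ncard = (n + 2) / 2) : indepNumOn (cycleGraph (n + 2)) Aᶜ = (n + 2) / 2 :=
  indepNumOn_eq hA.disjoint_image_add_one.subset_compl_left hA.image_add_one
    ((ncard_image_add_one A).trans hcard) fun _ _ hT => by
      have := hT.two_mul_ncard_le
      omega

end Cycle

section Sunlet
variable {n : ℕ}

def sunletCycleEmbedding (n : ℕ) : cycleGraph n ↪g sunlet n where
  toFun := Sum.inl
  inj' := Sum.inl_injective
  map_rel_iff' {i j} := by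
    simp only [Function.Embedding.coeFn_mk, sunlet, fromRel_adj, ne_eq, Sum.inl.injEq]
    exact ⟨fun h => h.2.elim id (·.symm), fun h => ⟨h.ne, Or.inl h⟩⟩

lemma isIndep_image_inl_iff {A : Set (Fin n)} :
    IsIndep (sunlet n) (Sum.inl '' A) ↔ IsIndep (cycleGraph n) A :=
  isIndep_image_iff (sunletCycleEmbedding n)

lemma indepNumOn_sunlet_image_inl (B : Set (Fin n)) :
    indepNumOn (sunlet n) (Sum.inl '' B) = indepNumOn (cycleGraph n) B :=
  indepNumOn_image (sunletCycleEmbedding n) B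

lemma sunlet_adj_inl_inr {i j : Fin n} : (sunlet n).Adj (Sum.inl i) (Sum.inr j) ↔ i = j := by
  simp [sunlet]

lemma sunlet_not_adj_inr_inr {i j : Fin n} : ¬ (sunlet n).Adj (Sum.inr i) (Sum.inr j) := by
  simp [sunlet]

lemma isIndep_range_inr : IsIndep (sunlet n) (range Sum.inr) := by
  rintro _ ⟨i, rfl⟩ _ ⟨j, rfl⟩ -
  exact sunlet_not_adj_inr_inr

lemma IsIndep.ncard_le_of_sunlet {S : Set (Fin n ⊕ Fin n)} (hS : IsIndep (sunlet n) S) :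
    S.ncard ≤ n := by
  have hinj : InjOn (Sum.elim id id) S := by
    rintro (i | i) hi (j | j) hj (rfl : i = j)
    · rfl
    · exact absurd (sunlet_adj_inl_inr.2 rfl) (hS hi hj Sum.inl_ne_inr)
    · exact absurd (sunlet_adj_inl_inr.2 rfl).symm (hS hi hj Sum.inr_ne_inl)
    · rfl
  rw [← hinj.ncard_image]
  exact (ncard_le_card _).trans (Nat.card_fin n).le

lemma indepNumOn_sunlet_univ : indepNumOn (sunlet n) univ = n :=
  indepNumOn_eq (subset_univ _) isIndep_range_inr
    (by rw [ncard_range_of_injective Sum.inr_injective, Nat.card_fin])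
    fun _ _ hT => hT.ncard_le_of_sunlet

lemma ncard_union_le_indepNumOn_sunlet_compl {S : Set (Fin n ⊕ Fin n)}
    (hS : IsIndep (sunlet n) S) {P : Set (Fin n)} (hP : IsIndep (cycleGraph n) P) :
    (P ∪ Sum.inl ⁻¹' S).ncard ≤ indepNumOn (sunlet n) Sᶜ := by
  set A := Sum.inl ⁻¹' S
  have hsub : Sum.inl '' (P \ A) ∪ Sum.inr '' A ⊆ Sᶜ := by
    rintro _ (⟨p, ⟨-, hpA⟩, rfl⟩ | ⟨a, haA, rfl⟩) hS'
    · exact hpA hS'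
    · exact hS haA hS' Sum.inl_ne_inr (sunlet_adj_inl_inr.2 rfl)
  have hindep : IsIndep (sunlet n) (Sum.inl '' (P \ A) ∪ Sum.inr '' A) := by
    rintro _ (⟨p, hp, rfl⟩ | ⟨a, ha, rfl⟩) _ (⟨q, hq, rfl⟩ | ⟨b, hb, rfl⟩) hne hadj
    · exact isIndep_image_inl_iff.2 (hP.mono sdiff_subset) (mem_image_of_mem _ hp)
        (mem_image_of_mem _ hq) hne hadj
    · exact hp.2 (sunlet_adj_inl_inr.1 hadj ▸ hb)
    · exact hq.2 (sunlet_adj_inl_inr.1 hadj.symm ▸ ha)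
    · exact sunlet_not_adj_inr_inr hadj
  have hdisj : Disjoint (Sum.inl '' (P \ A)) (Sum.inr '' A) :=
    disjoint_left.2 <| by
      rintro _ ⟨p, -, rfl⟩ ⟨a, -, h⟩
      exact Sum.inr_ne_inl h
  calc (P ∪ A).ncard = (P \ A).ncard + A.ncard := (ncard_sdiff_add_ncard P A).symm
    _ = (Sum.inl '' (P \ A) ∪ Sum.inr '' A).ncard := by
      rw [ncard_union_eq hdisj, ncard_image_of_injective _ Sum.inl_injective,
        ncard_image_of_injective _ Sum.inr_injective]
    _ ≤ indepNumOn (sunlet n) Sᶜ := le_indepNumOn hsub hindep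

end Sunlet

section Steps
variable {n : ℕ}

lemma IsMaximaxStep.eq_range_inr_of_sunlet {S : Set (Fin (n + 2) ⊕ Fin (n + 2))}
    (hS : IsMaximaxStep (sunlet (n + 2)) univ S) : S = range Sum.inr := by
  obtain ⟨⟨-, hSi, hcard⟩, hmin⟩ := hS
  have hpendant : IsMaxIndepOn (sunlet (n + 2)) univ (range Sum.inr) :=
    ⟨subset_univ _, isIndep_range_inr,
      by rw [ncard_range_of_injective Sum.inr_injective, Nat.card_fin, indepNumOn_sunlet_univ]⟩
  have hresidual : indepNumOn (sunlet (n + 2)) Sᶜ ≤ (n + 2) / 2 := by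
    have := hmin _ hpendant
    rwa [← compl_eq_univ_sdiff, ← compl_eq_univ_sdiff, compl_range_inr, ← image_univ,
      indepNumOn_sunlet_image_inl, indepNumOn_cycleGraph_univ] at this
  have hnoInl : Sum.inl ⁻¹' S = ∅ := by
    by_contra hne
    obtain ⟨j, hj⟩ := nonempty_iff_ne_empty.2 hne
    obtain ⟨P, hP, hPcard, hjP⟩ := exists_isIndep_cycleGraph_ncard_eq_notMem j
    have hlt : P.ncard < (P ∪ Sum.inl ⁻¹' S).ncard :=
      ncard_lt_ncard ((ssubset_iff_of_subset subset_union_left).2 ⟨j, Or.inr hj, hjP⟩)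
    have := ncard_union_le_indepNumOn_sunlet_compl hSi hP
    omega
  have hsub : S ⊆ range Sum.inr := by
    rintro (i | i) hi
    · exact absurd (show i ∈ Sum.inl ⁻¹' S from hi) (hnoInl ▸ notMem_empty i)
    · exact mem_range_self i
  refine eq_of_subset_of_ncard_le hsub ?_
  rw [hcard, ncard_range_of_injective Sum.inr_injective, Nat.card_fin, indepNumOn_sunlet_univ]

lemma IsMaxIndepOn.exists_eq_image_inl_of_sunlet {S : Set (Fin (n + 2) ⊕ Fin (n + 2))}
    (hS : IsMaxIndepOn (sunlet (n + 2)) (range Sum.inl) S) :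
    ∃ A, IsIndep (cycleGraph (n + 2)) A ∧ A.ncard = (n + 2) / 2 ∧ S = Sum.inl '' A := by
  obtain ⟨hSR, hSi, hcard⟩ := hS
  rw [← image_univ] at hSR hcard
  obtain ⟨A, -, rfl⟩ := subset_image_iff.1 hSR
  rw [indepNumOn_sunlet_image_inl, indepNumOn_cycleGraph_univ,
    ncard_image_of_injective _ Sum.inl_injective] at hcard
  exact ⟨A, isIndep_image_inl_iff.1 hSi, hcard, rfl⟩

lemma IsMaximaxSeq.length_of_sunlet {L : List (Set (Fin (n + 2) ⊕ Fin (n + 2)))}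
    (hL : IsMaximaxSeq (sunlet (n + 2)) univ L) : L.length = (n + 2) % 2 + 3 := by
  obtain ⟨S₁, L₁, rfl, hS₁, hL₁⟩ := hL.exists_cons univ_nonempty
  rw [hS₁.eq_range_inr_of_sunlet, ← compl_eq_univ_sdiff, compl_range_inr] at hL₁
  obtain ⟨S₂, L₂, rfl, hS₂, hL₂⟩ := hL₁.exists_cons (range_nonempty _)
  obtain ⟨A, hA, hAcard, rfl⟩ := hS₂.1.exists_eq_image_inl_of_sunlet
  rw [← image_univ, ← image_sdiff Sum.inl_injective, ← compl_eq_univ_sdiff] at hL₂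
  have hα : indepNumOn (sunlet (n + 2)) (Sum.inl '' Aᶜ) = (n + 2) / 2 := by
    rw [indepNumOn_sunlet_image_inl, hA.indepNumOn_compl hAcard]
  have hcard : (Sum.inl '' Aᶜ : Set (Fin (n + 2) ⊕ Fin (n + 2))).ncard = n + 2 - (n + 2) / 2 := by
    rw [ncard_image_of_injective _ Sum.inl_injective, ncard_compl, Nat.card_fin, hAcard]
  simp only [List.length_cons]
  rcases Nat.mod_two_eq_zero_or_one (n + 2) with hpar | hpar
  · rw [hL₂.length_eq_one (nonempty_of_ncard_ne_zero (by omega)) (by omega)]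
    omega
  · rw [hL₂.length_eq_two (by omega)]
    omega

end Steps

theorem sunlet_chiImax (n : ℕ) (hn : 3 ≤ n) :
    (Even n → ChiImaxEq (sunlet n) 3) ∧ (Odd n → ChiImaxEq (sunlet n) 4) := by
  obtain ⟨m, rfl⟩ : ∃ m, n = m + 2 := ⟨n - 2, by omega⟩
  refine ⟨fun he => chiImaxEq_of_forall_length_eq fun L hL => ?_,
    fun ho => chiImaxEq_of_forall_length_eq fun L hL => ?_⟩
  · rw [hL.length_of_sunlet, Nat.even_iff.1 he]
  · rw [hL.length_of_sunlet, Nat.odd_iff.1 ho]
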